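/- Let q ∈ ℂ be nonzero and not a root of unity, let k ≥ 0 and l ≥ 1 be integers and x ∈ ℂ. For 0 ≤ r,s ≤ l−1 define b_{rs} := q^{−s(l+k+r−s)} · [l+k+r choose s]_q · ∏_{j=0}^{l+k+r−s−1}(x − q^{−2j}). Then det((b_{rs})_{r,s=0,…,l−1}) = q^{−l(l−1)(k+l)} · ∏_{j=1}^{l−1} (x − q^{2(l−j)})^j · (x − q^{−2(j+k)})^{l−j} · ∏_{j=0}^{k} (x − q^{−2j})^l. -/

import Mathlib

/-!
STATEMENT 5: determinant formula for the matrix (b_{rs}) built from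
q-binomial coefficients (Heckenberger–Schmüdgen, eq. (det)).
-/

open scoped BigOperators

noncomputable section

/-- The symmetric q-integer `[m]_q = (q^m − q^{−m})/(q − q^{−1})`. -/
def qInt (q : ℂ) (m : ℕ) : ℂ := (q ^ m - q⁻¹ ^ m) / (q - q⁻¹)

/-- The q-factorial `[m]_q! = [m]_q [m−1]_q ⋯ [1]_q`, with `[0]_q! = 1`. -/
def qFact (q : ℂ) : ℕ → ℂ
  | 0 => 1
  | m + 1 => qInt q (m + 1) * qFact q m

/-- The q-binomial coefficient `[m choose r]_q = [m]_q!/([r]_q! [m−r]_q!)`. -/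
def qBinom (q : ℂ) (m r : ℕ) : ℂ := qFact q m / (qFact q r * qFact q (m - r))

end

noncomputable section
def aS (q x : ℂ) (j : ℕ) : ℂ := x * q ^ (-(2 * (j : ℤ)))
def bS (q : ℂ) (i : ℕ) : ℂ := q ^ (2 - 2 * (i : ℤ))
def yS (q : ℂ) (n : ℕ) : ℂ := q ^ (-(2 * (n : ℤ)))
open Finset Polynomial in
def eP (q x : ℂ) (l t : ℕ) : ℂ[X] := ∏ j ∈ Finset.Icc (t + 1) (l - 1), (X - C (aS q x j))
open Finset Polynomial in
def pP (q : ℂ) (s : ℕ) : ℂ[X] := ∏ i ∈ Finset.Icc 1 s, (X - C (bS q i))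
end


section Helpers
open Finset Polynomial

variable {q : ℂ}

lemma zpow_finset_sum (hq : q ≠ 0) {α : Type*} (s : Finset α) (g : α → ℤ) :
    q ^ (∑ i ∈ s, g i) = ∏ i ∈ s, q ^ g i := by
  classical
  induction s using Finset.cons_induction with
  | empty => simp
  | cons a s ha ih => rw [Finset.sum_cons, Finset.prod_cons, zpow_add₀ hq, ih]

lemma qdiff_ne (hq : q ≠ 0) (hroot : ∀ m : ℕ, 0 < m → q ^ m ≠ 1) {i : ℕ} (hi : 1 ≤ i) :
    q ^ (i : ℤ) - q ^ (-(i : ℤ)) ≠ 0 := by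
  intro h
  apply hroot (2 * i) (by omega)
  have h1 : q ^ (i : ℤ) = q ^ (-(i : ℤ)) := by linear_combination h
  have h2 : q ^ (i : ℤ) * q ^ (-(i : ℤ)) = 1 := by
    rw [← zpow_add₀ hq]; simp
  calc q ^ (2 * i) = q ^ (((2 * i : ℕ) : ℤ)) := by rw [zpow_natCast]
    _ = q ^ ((i : ℤ) + (i : ℤ)) := by norm_num; ring_nf
    _ = q ^ (i : ℤ) * q ^ (i : ℤ) := zpow_add₀ hq _ _
    _ = q ^ (i : ℤ) * q ^ (-(i : ℤ)) := by rw [← h1]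
    _ = 1 := h2

lemma qq_ne (hq : q ≠ 0) (hroot : ∀ m : ℕ, 0 < m → q ^ m ≠ 1) : q - q⁻¹ ≠ 0 := by
  have := qdiff_ne hq hroot (i := 1) le_rfl
  simpa using this

lemma qInt_eq (hq : q ≠ 0) (m : ℕ) :
    qInt q m = (q ^ (m : ℤ) - q ^ (-(m : ℤ))) / (q - q⁻¹) := by
  rw [qInt, zpow_neg, zpow_natCast, inv_pow]

lemma qInt_ne (hq : q ≠ 0) (hroot : ∀ m : ℕ, 0 < m → q ^ m ≠ 1) {i : ℕ} (hi : 1 ≤ i) :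
    qInt q i ≠ 0 := by
  rw [qInt_eq hq]
  exact div_ne_zero (qdiff_ne hq hroot hi) (qq_ne hq hroot)

lemma qFact_ne (hq : q ≠ 0) (hroot : ∀ m : ℕ, 0 < m → q ^ m ≠ 1) (m : ℕ) :
    qFact q m ≠ 0 := by
  induction m with
  | zero => simp [qFact]
  | succ n ih => exact mul_ne_zero (qInt_ne hq hroot (by omega)) ih

lemma qFact_eq_prod (m : ℕ) : qFact q m = ∏ i ∈ Icc 1 m, qInt q i := by
  induction m with
  | zero => simp [qFact]
  | succ n ih =>
      rw [Finset.prod_Icc_succ_top (by omega), ← ih, qFact, mul_comm]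

lemma qFact_shift {s n : ℕ} (h : s ≤ n) :
    qFact q n = (∏ i ∈ Icc 1 s, qInt q (n - i + 1)) * qFact q (n - s) := by
  induction s with
  | zero => simp
  | succ m ih =>
      rw [ih (by omega), Finset.prod_Icc_succ_top (by omega)]
      have h1 : n - m = (n - (m + 1)) + 1 := by omega
      have h2 : n - (m + 1) + 1 = n - m := by omega
      rw [h1, qFact, h2]
      ring

lemma qBinom_eq_prod (hq : q ≠ 0) (hroot : ∀ m : ℕ, 0 < m → q ^ m ≠ 1) {s n : ℕ} (h : s ≤ n) :
    qBinom q n s = ∏ i ∈ Icc 1 s, (qInt q (n - i + 1) / qInt q i) := by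
  have hns : qFact q (n - s) ≠ 0 := qFact_ne hq hroot _
  have hfs : qFact q s ≠ 0 := qFact_ne hq hroot _
  rw [qBinom, qFact_shift h, Finset.prod_div_distrib, ← qFact_eq_prod]
  field_simp

end Helpers


section
open Finset
variable {q x : ℂ}
lemma factor_id (hq0 : q ≠ 0) (hroot : ∀ m : ℕ, 0 < m → q ^ m ≠ 1)
    {n s i : ℕ} (hi : 1 ≤ i) (his : i ≤ s) (hs : s ≤ n) :
    q ^ (-((n : ℤ) - s)) * (qInt q (n - i + 1) / qInt q i)
      = -q ^ ((s : ℤ) + i - 1) / (q ^ (i : ℤ) - q ^ (-(i : ℤ))) * (yS q n - bS q i) := by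
  have hcast : ((n - i + 1 : ℕ) : ℤ) = (n : ℤ) - i + 1 := by omega
  have hratio : qInt q (n - i + 1) / qInt q i
      = (q ^ ((n : ℤ) - i + 1) - q ^ (-((n : ℤ) - i + 1))) / (q ^ (i : ℤ) - q ^ (-(i : ℤ))) := by
    rw [qInt_eq hq0, qInt_eq hq0, div_div_div_comm, div_self (qq_ne hq0 hroot), div_one, hcast]
  rw [hratio, yS, bS]
  rw [div_mul_eq_mul_div, mul_div_assoc']
  congr 1
  simp only [mul_sub, neg_mul, sub_neg_eq_add, ← zpow_add₀ hq0]
  rw [show -((n : ℤ) - s) + ((n : ℤ) - i + 1) = ((s : ℤ) + i - 1) + (2 - 2 * i) by ring,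
    show -((n : ℤ) - s) + -((n : ℤ) - i + 1) = ((s : ℤ) + i - 1) + -(2 * n) by ring]
  ring

lemma binom_part (hq0 : q ≠ 0) (hroot : ∀ m : ℕ, 0 < m → q ^ m ≠ 1)
    {n s : ℕ} (hs : s ≤ n) :
    q ^ (-((s : ℤ) * ((n : ℤ) - s))) * qBinom q n s
      = (∏ i ∈ Icc 1 s, (-q ^ ((s : ℤ) + i - 1) / (q ^ (i : ℤ) - q ^ (-(i : ℤ)))))
        * ∏ i ∈ Icc 1 s, (yS q n - bS q i) := by
  have hpow : q ^ (-((s : ℤ) * ((n : ℤ) - s))) = ∏ _i ∈ Icc 1 s, q ^ (-((n : ℤ) - s)) := by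
    rw [← zpow_finset_sum hq0, Finset.sum_const, Nat.card_Icc]
    congr 1
    rw [show s + 1 - 1 = s from by omega, nsmul_eq_mul]
    push_cast
    ring
  rw [hpow, qBinom_eq_prod hq0 hroot hs, ← Finset.prod_mul_distrib, ← Finset.prod_mul_distrib]
  apply Finset.prod_congr rfl
  intro i hi
  simp only [Finset.mem_Icc] at hi
  exact factor_id hq0 hroot hi.1 hi.2 hs
end


section
open Finset
variable {q x : ℂ}
lemma Psplit (hq0 : q ≠ 0) {l k r s : ℕ} (hl : 1 ≤ l) (hs : s ≤ l - 1) :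
    ∏ j ∈ Finset.range (l + k + r - s), (x - q ^ (-(2 * (j : ℤ))))
      = (∏ j ∈ Finset.range (k + r + 1), (x - q ^ (-(2 * (j : ℤ)))))
        * ∏ m ∈ Icc (s + 1) (l - 1), ((-q ^ (2 * (m : ℤ))) * (yS q (l + k + r) - aS q x m)) := by
  set n := l + k + r with hn
  have h1 : k + r + 1 ≤ n - s := by omega
  have h2 : Finset.range (n - s) = Finset.range (k + r + 1) ∪ Ico (k + r + 1) (n - s) := by
    rw [Finset.range_eq_Ico, Finset.range_eq_Ico]
    exact (Finset.Ico_union_Ico_eq_Ico (Nat.zero_le _) h1).symm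
  rw [h2, Finset.prod_union (by
    rw [Finset.range_eq_Ico]
    exact Finset.Ico_disjoint_Ico_consecutive 0 (k + r + 1) (n - s))]
  congr 1
  apply Finset.prod_bij' (fun j _ => n - j) (fun m _ => n - m)
  · intro a ha
    simp only [Finset.mem_Ico] at ha
    simp only [Finset.mem_Icc]
    omega
  · intro a ha
    simp only [Finset.mem_Icc] at ha
    simp only [Finset.mem_Ico]
    omega
  · intro a ha
    simp only [Finset.mem_Ico] at ha
    omega
  · intro a ha
    simp only [Finset.mem_Icc] at ha
    omega
  · intro j hj
    simp only [Finset.mem_Ico] at hj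
    have hcast : ((n - j : ℕ) : ℤ) = (n : ℤ) - j := by omega
    rw [yS, aS, hcast]
    have e1 : (q : ℂ) ^ (2 * ((n : ℤ) - j)) * q ^ (-(2 * (n : ℤ))) = q ^ (-(2 * (j : ℤ))) := by
      rw [← zpow_add₀ hq0]; congr 1; ring
    have e2 : (q : ℂ) ^ (2 * ((n : ℤ) - j)) * q ^ (-(2 * ((n : ℤ) - j))) = 1 := by
      rw [← zpow_add₀ hq0]; simp
    linear_combination e1 - x * e2

end


section
open Finset Polynomial

lemma newton_expansion (a : ℕ → ℂ) : ∀ (s : ℕ) (p : ℂ[X]), p.natDegree ≤ s →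
    ∃ c : ℕ → ℂ,
      (p = ∑ t ∈ Finset.range (s + 1), C (c t) * ∏ j ∈ Icc (t + 1) s, (X - C (a j)))
      ∧ c s = p.eval (a s) := by
  intro s
  induction s with
  | zero =>
      intro p hp
      refine ⟨fun _ => p.eval (a 0), ?_, rfl⟩
      rw [Polynomial.eq_C_of_natDegree_le_zero hp]
      simp [Polynomial.eval_C]
  | succ s ih =>
      intro p hp
      set d := p /ₘ (X - C (a (s + 1))) with hd
      have hdeg : d.natDegree ≤ s := by
        rw [hd, Polynomial.natDegree_divByMonic p (monic_X_sub_C (a (s + 1)))]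
        simp only [natDegree_X_sub_C]
        omega
      obtain ⟨c, hc, hcs⟩ := ih d hdeg
      refine ⟨fun t => if t = s + 1 then p.eval (a (s + 1)) else c t, ?_, by simp⟩
      have hsplit : p = C (p.eval (a (s + 1))) + (X - C (a (s + 1))) * d := by
        conv_lhs => rw [← Polynomial.modByMonic_add_div p (X - C (a (s + 1)))]
        rw [Polynomial.modByMonic_X_sub_C_eq_C_eval]
      have hlast : Icc (s + 1 + 1) (s + 1) = (∅ : Finset ℕ) := by
        apply Finset.Icc_eq_empty; omega
      have hrest : ∀ t ∈ Finset.range (s + 1),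
          C (if t = s + 1 then p.eval (a (s + 1)) else c t) * ∏ j ∈ Icc (t + 1) (s + 1), (X - C (a j))
          = (X - C (a (s + 1))) * (C (c t) * ∏ j ∈ Icc (t + 1) s, (X - C (a j))) := by
        intro t ht
        simp only [Finset.mem_range] at ht
        rw [if_neg (by omega)]
        rw [Finset.prod_Icc_succ_top (by omega)]
        ring
      rw [Finset.sum_range_succ, hlast]
      rw [Finset.sum_congr rfl hrest, ← Finset.mul_sum, ← hc]
      simp only [Finset.prod_empty, mul_one]
      norm_num
      nth_rewrite 1 [hsplit]
      ring


end

section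
open Finset Polynomial

lemma prod_Ioi_rev {M : Type*} [CommMonoid M] {n : ℕ} (g : Fin n → Fin n → M) :
    (∏ i : Fin n, ∏ j ∈ Ioi i, g (Fin.rev j) (Fin.rev i)) = ∏ i : Fin n, ∏ j ∈ Ioi i, g i j := by
  rw [Finset.prod_sigma', Finset.prod_sigma']
  refine Finset.prod_bij' (fun p _ => ⟨Fin.rev p.2, Fin.rev p.1⟩)
    (fun p _ => ⟨Fin.rev p.2, Fin.rev p.1⟩) ?_ ?_ ?_ ?_ ?_
  · intro p hp
    simp only [Finset.mem_sigma, Finset.mem_univ, Finset.mem_Ioi, true_and] at hp ⊢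
    exact Fin.rev_lt_rev.mpr hp
  · intro p hp
    simp only [Finset.mem_sigma, Finset.mem_univ, Finset.mem_Ioi, true_and] at hp ⊢
    exact Fin.rev_lt_rev.mpr hp
  · intro p hp; simp [Fin.rev_rev]
  · intro p hp; simp [Fin.rev_rev]
  · intro p hp; rfl

variable (q x : ℂ) (l k : ℕ)

lemma eP_monic (t : ℕ) : (eP q x l t).Monic :=
  monic_prod_of_monic _ _ (fun j _ => monic_X_sub_C _)

lemma eP_natDegree (t : ℕ) : (eP q x l t).natDegree = l - 1 - t := by
  rw [eP, natDegree_prod_of_monic _ _ (fun j _ => monic_X_sub_C _)]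
  simp only [natDegree_X_sub_C]
  rw [Finset.sum_const, Nat.card_Icc, smul_eq_mul, mul_one]
  omega

lemma pP_natDegree (s : ℕ) : (pP q s).natDegree = s := by
  rw [pP, natDegree_prod_of_monic _ _ (fun j _ => monic_X_sub_C _)]
  simp only [natDegree_X_sub_C]
  rw [Finset.sum_const, Nat.card_Icc, smul_eq_mul, mul_one]
  omega

lemma det_F (hl : 1 ≤ l) :
    Matrix.det (Matrix.of (fun r s : Fin l =>
        (∏ i ∈ Icc 1 (s : ℕ), (yS q (l + k + (r : ℕ)) - bS q i)) *
        ∏ m ∈ Icc ((s : ℕ) + 1) (l - 1), (yS q (l + k + (r : ℕ)) - aS q x m)))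
    = (∏ i : Fin l, ∏ j ∈ Ioi i, (yS q (l + k + (i : ℕ)) - yS q (l + k + (j : ℕ))))
      * ∏ s : Fin l, ∏ i ∈ Icc 1 (s : ℕ), (aS q x (s : ℕ) - bS q i) := by
  classical
  set y : Fin l → ℂ := fun r => yS q (l + k + (r : ℕ)) with hy
  -- Newton coefficients for each column
  have hex : ∀ s : Fin l, ∃ c : ℕ → ℂ,
      (pP q (s : ℕ) = ∑ t ∈ Finset.range ((s : ℕ) + 1),
        C (c t) * ∏ j ∈ Icc (t + 1) (s : ℕ), (X - C (aS q x j)))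
      ∧ c (s : ℕ) = (pP q (s : ℕ)).eval (aS q x (s : ℕ)) :=
    fun s => newton_expansion (aS q x) (s : ℕ) _ (le_of_eq (pP_natDegree q (s : ℕ)))
  choose c hc hcd using hex
  set E : Matrix (Fin l) (Fin l) ℂ := Matrix.of (fun r t : Fin l => (eP q x l (t : ℕ)).eval (y r))
    with hE
  set T : Matrix (Fin l) (Fin l) ℂ :=
    Matrix.of (fun t s : Fin l => if (t : ℕ) ≤ (s : ℕ) then c s (t : ℕ) else 0) with hT
  -- step 1 : the matrix is E * T
  have hFET : Matrix.of (fun r s : Fin l =>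
        (∏ i ∈ Icc 1 (s : ℕ), (y r - bS q i)) *
        ∏ m ∈ Icc ((s : ℕ) + 1) (l - 1), (y r - aS q x m)) = E * T := by
    ext r s
    rw [Matrix.mul_apply]
    have hpoly : (pP q (s : ℕ) * ∏ m ∈ Icc ((s : ℕ) + 1) (l - 1), (X - C (aS q x m)))
        = ∑ t ∈ Finset.range ((s : ℕ) + 1), C (c s t) * eP q x l t := by
      rw [hc s, Finset.sum_mul]
      refine Finset.sum_congr rfl (fun t ht => ?_)
      simp only [Finset.mem_range] at ht
      rw [mul_assoc]
      congr 1
      rw [eP]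
      rw [← Finset.Ico_add_one_right_eq_Icc, ← Finset.Ico_add_one_right_eq_Icc, ← Finset.Ico_add_one_right_eq_Icc]
      rw [Finset.prod_Ico_consecutive _ (by omega : t + 1 ≤ (s : ℕ) + 1)
        (by omega : (s : ℕ) + 1 ≤ (l - 1) + 1)]
    have lhs_eq : (∏ i ∈ Icc 1 (s : ℕ), (y r - bS q i)) *
        ∏ m ∈ Icc ((s : ℕ) + 1) (l - 1), (y r - aS q x m)
        = ∑ t ∈ Finset.range ((s : ℕ) + 1), c s t * (eP q x l t).eval (y r) := by
      have := congrArg (Polynomial.eval (y r)) hpoly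
      rw [eval_mul, eval_prod, eval_finset_sum] at this
      simp only [eval_mul, eval_C, eval_prod, eval_sub, eval_X, pP] at this
      simpa using this
    rw [Matrix.of_apply, lhs_eq]
    -- now RHS
    have : ∀ t : Fin l, E r t * T t s
        = if (t : ℕ) ∈ Finset.range ((s : ℕ) + 1) then c s (t : ℕ) * (eP q x l (t : ℕ)).eval (y r) else 0 := by
      intro t
      rw [hE, hT]
      simp only [Matrix.of_apply, Finset.mem_range]
      by_cases h : (t : ℕ) ≤ (s : ℕ)
      · rw [if_pos h, if_pos (by omega)]; ring
      · rw [if_neg h, if_neg (by omega), mul_zero]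
    rw [Finset.sum_congr rfl (fun t _ => this t)]
    rw [Fin.sum_univ_eq_sum_range
      (fun t => if t ∈ Finset.range ((s : ℕ) + 1) then c s t * (eP q x l t).eval (y r) else 0) l]
    rw [← Finset.sum_filter]
    refine Finset.sum_congr ?_ (fun _ _ => rfl)
    ext t
    simp only [Finset.mem_filter, Finset.mem_range]
    omega
  rw [hFET, Matrix.det_mul]
  -- step 2 : det T
  have hdetT : T.det = ∏ s : Fin l, ∏ i ∈ Icc 1 (s : ℕ), (aS q x (s : ℕ) - bS q i) := by
    rw [Matrix.det_of_upperTriangular (by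
      intro i j hij
      rw [hT, Matrix.of_apply, if_neg (by simpa using hij)])]
    refine Finset.prod_congr rfl (fun s _ => ?_)
    rw [hT, Matrix.of_apply, if_pos le_rfl, hcd s]
    rw [pP, eval_prod]
    simp only [eval_sub, eval_X, eval_C]
  -- step 3 : det E
  have hdetE : E.det = ∏ i : Fin l, ∏ j ∈ Ioi i, (y i - y j) := by
    set M : Matrix (Fin l) (Fin l) ℂ :=
      Matrix.of (fun i j : Fin l => (eP q x l ((Fin.rev j) : ℕ)).eval (y (Fin.rev i))) with hM
    have hsub : E = M.submatrix ⇑Fin.revPerm ⇑Fin.revPerm := by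
      ext r t
      simp [hM, hE, Matrix.submatrix_apply, Fin.revPerm, Fin.rev_rev]
      have hvt : l - (l - ((t : ℕ) + 1) + 1) = (t : ℕ) := by omega
      rw [hvt]
    rw [hsub, Matrix.det_submatrix_equiv_self]
    have hdeg : ∀ j : Fin l, (eP q x l ((Fin.rev j) : ℕ)).natDegree = (j : ℕ) := by
      intro j
      rw [eP_natDegree]
      have := Fin.val_rev j
      omega
    rw [hM, ← Matrix.det_eval_matrixOfPolynomials_eq_det_vandermonde
      (fun i => y (Fin.rev i)) (fun j => eP q x l ((Fin.rev j) : ℕ)) hdeg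
      (fun j => eP_monic q x l _)]
    rw [Matrix.det_vandermonde]
    exact prod_Ioi_rev (fun i j => y i - y j)
  rw [hdetT, hdetE]
end


section
open Finset
variable {G : Type*} [CommMonoid G]

lemma range_split (g : ℕ → G) {a b : ℕ} (h : a ≤ b) :
    ∏ j ∈ range b, g j = (∏ j ∈ range a, g j) * ∏ j ∈ Ico a b, g j := by
  rw [range_eq_Ico, range_eq_Ico]
  exact (Finset.prod_Ico_consecutive _ (Nat.zero_le a) h).symm

-- (S1) row-factor product
lemma rho_prod (g : ℕ → G) (l k : ℕ) (hl : 1 ≤ l) :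
    (∏ r ∈ range l, ∏ j ∈ range (k + r + 1), g j)
      = (∏ j ∈ range (k + 1), g j) ^ l * ∏ j ∈ Icc 1 (l - 1), (g (j + k)) ^ (l - j) := by
  have hsplit : ∀ r : ℕ, ∏ j ∈ range (k + r + 1), g j
      = (∏ j ∈ range (k + 1), g j) * ∏ t ∈ range r, g (k + 1 + t) := by
    intro r
    rw [range_split g (by omega : k + 1 ≤ k + r + 1), Finset.prod_Ico_eq_prod_range,
      show k + r + 1 - (k + 1) = r from by omega]
  calc ∏ r ∈ range l, ∏ j ∈ range (k + r + 1), g j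
      = ∏ r ∈ range l, ((∏ j ∈ range (k + 1), g j) * ∏ t ∈ range r, g (k + 1 + t)) :=
        Finset.prod_congr rfl (fun r _ => hsplit r)
    _ = (∏ j ∈ range (k + 1), g j) ^ l * ∏ r ∈ range l, ∏ t ∈ range r, g (k + 1 + t) := by
        rw [Finset.prod_mul_distrib, Finset.prod_const, Finset.card_range]
    _ = (∏ j ∈ range (k + 1), g j) ^ l * ∏ j ∈ Icc 1 (l - 1), (g (j + k)) ^ (l - j) := by
        congr 1
        have hswap : (∏ r ∈ range l, ∏ t ∈ range r, g (k + 1 + t))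
            = ∏ t ∈ range l, ∏ r ∈ Ico (t + 1) l, g (k + 1 + t) := by
          apply Finset.prod_comm'
          intro r t
          simp only [Finset.mem_range, Finset.mem_Ico]
          omega
        rw [hswap]
        have hconst : ∀ t ∈ range l, (∏ r ∈ Ico (t + 1) l, g (k + 1 + t)) = (g (k + 1 + t)) ^ (l - (t + 1)) := by
          intro t _
          rw [Finset.prod_const, Nat.card_Ico]
        rw [Finset.prod_congr rfl hconst]
        obtain ⟨m, rfl⟩ : ∃ m, l = m + 1 := ⟨l - 1, by omega⟩
        rw [Finset.prod_range_succ]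
        rw [show m + 1 - (m + 1) = 0 from by omega, pow_zero, mul_one]
        rw [show m + 1 - 1 = m from by omega]
        rw [show Icc 1 m = Ico 1 (m + 1) from (Finset.Ico_add_one_right_eq_Icc _ _).symm]
        rw [Finset.prod_Ico_eq_prod_range]
        rw [show m + 1 - 1 = m from by omega]
        refine Finset.prod_congr rfl (fun t ht => ?_)
        simp only [Finset.mem_range] at ht
        rw [show k + 1 + t = 1 + t + k from by omega]
        congr 1
        omega

-- (S2b) triangular double product to powers
lemma tri_prod (g : ℕ → G) (l : ℕ) (hl : 1 ≤ l) :
    (∏ s ∈ range l, ∏ m ∈ Icc 1 s, g m) = ∏ m ∈ Icc 1 (l - 1), (g m) ^ (l - m) := by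
  have hswap : (∏ s ∈ range l, ∏ m ∈ Icc 1 s, g m) = ∏ m ∈ Icc 1 (l - 1), ∏ s ∈ Ico m l, g m := by
    apply Finset.prod_comm'
    intro s m
    simp only [Finset.mem_range, Finset.mem_Icc, Finset.mem_Ico]
    omega
  rw [hswap]
  exact Finset.prod_congr rfl (fun m _ => by rw [Finset.prod_const, Nat.card_Ico])

-- Icc reflection
lemma Icc_reflect (g : ℕ → G) (s : ℕ) :
    (∏ i ∈ Icc 1 s, g (s + 1 - i)) = ∏ m ∈ Icc 1 s, g m := by
  apply Finset.prod_nbij' (fun i => s + 1 - i) (fun m => s + 1 - m)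
  · intro i hi; simp only [Finset.mem_Icc] at *; omega
  · intro m hm; simp only [Finset.mem_Icc] at *; omega
  · intro i hi; simp only [Finset.mem_Icc] at hi; omega
  · intro m hm; simp only [Finset.mem_Icc] at hm; omega
  · intro i hi; rfl

-- Fin pair product to ℕ pair product
lemma fin_pair_to_nat (l : ℕ) (g : ℕ → ℕ → G) :
    (∏ i : Fin l, ∏ j ∈ Ioi i, g (i : ℕ) (j : ℕ))
      = ∏ i ∈ range l, ∏ j ∈ Ico (i + 1) l, g i j := by
  rw [← Fin.prod_univ_eq_prod_range (fun i => ∏ j ∈ Ico (i + 1) l, g i j) l]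
  refine Finset.prod_congr rfl (fun i _ => ?_)
  refine Finset.prod_bij' (fun (j : Fin l) (_ : j ∈ Ioi i) => (j : ℕ))
    (fun j hj => ⟨j, (Finset.mem_Ico.mp hj).2⟩) ?_ ?_ ?_ ?_ ?_
  · intro j hj
    have h1 := Fin.lt_def.mp (Finset.mem_Ioi.mp hj)
    simp only [Finset.mem_Ico]
    exact ⟨by omega, j.isLt⟩
  · intro j hj
    have h1 := Finset.mem_Ico.mp hj
    simp only [Finset.mem_Ioi]
    rw [Fin.lt_def]
    simp only [Fin.val_mk]
    omega
  · intro j hj; rfl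
  · intro j hj; rfl
  · intro j hj; rfl

-- (S5) pair difference product equals triangular product
lemma pair_diff_prod (h : ℕ → G) (l : ℕ) :
    (∏ i ∈ range l, ∏ j ∈ Ico (i + 1) l, h (j - i)) = ∏ s ∈ range l, ∏ i ∈ Icc 1 s, h i := by
  have hswap : (∏ i ∈ range l, ∏ j ∈ Ico (i + 1) l, h (j - i))
      = ∏ j ∈ range l, ∏ i ∈ range j, h (j - i) := by
    apply Finset.prod_comm'
    intro i j
    simp only [Finset.mem_range, Finset.mem_Ico]
    omega
  rw [hswap]
  refine Finset.prod_congr rfl (fun j _ => ?_)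
  rw [show Icc 1 j = Ico 1 (j + 1) from (Finset.Ico_add_one_right_eq_Icc _ _).symm]
  refine Finset.prod_nbij' (fun i => j - i) (fun d => j - d) ?_ ?_ ?_ ?_ ?_
  · intro i hi; simp only [Finset.mem_range, Finset.mem_Ico] at *; omega
  · intro d hd; simp only [Finset.mem_range, Finset.mem_Ico] at *; omega
  · intro i hi; simp only [Finset.mem_range] at hi; show j - (j - i) = i; omega
  · intro d hd; simp only [Finset.mem_Ico] at hd; show j - (j - d) = d; omega
  · intro i hi; rfl

end

-- (S7) the exponent identity
section
open Finset
lemma exp_id (l k : ℕ) (hl : 1 ≤ l) :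
    ((∑ s ∈ range l, ∑ i ∈ Icc 1 s, ((s : ℤ) + i - 1))
      + ∑ s ∈ range l, ∑ m ∈ Icc (s + 1) (l - 1), (2 * (m : ℤ)))
      + (∑ i ∈ range l, ∑ j ∈ Ico (i + 1) l, (-(2 * ((l : ℤ) + k)) - i - j))
      + ∑ s ∈ range l, (-2 * (s : ℤ) * s)
      = -((l : ℤ) * ((l : ℤ) - 1) * ((k : ℤ) + l)) := by
  have hB : (∑ s ∈ range l, ∑ m ∈ Icc (s + 1) (l - 1), (2 * (m : ℤ)))
      = ∑ m ∈ range l, 2 * (m : ℤ) * m := by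
    have : (∑ s ∈ range l, ∑ m ∈ Icc (s + 1) (l - 1), (2 * (m : ℤ)))
        = ∑ m ∈ range l, ∑ s ∈ range m, 2 * (m : ℤ) := by
      apply Finset.sum_comm'
      intro s m
      simp only [Finset.mem_range, Finset.mem_Icc]
      omega
    rw [this]
    refine Finset.sum_congr rfl (fun m _ => ?_)
    rw [Finset.sum_const, Finset.card_range, nsmul_eq_mul]
    ring
  have hC : (∑ i ∈ range l, ∑ j ∈ Ico (i + 1) l, (-(2 * ((l : ℤ) + k)) - i - j))
      = ∑ j ∈ range l, ∑ i ∈ range j, (-(2 * ((l : ℤ) + k)) - i - j) := by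
    apply Finset.sum_comm'
    intro i j
    simp only [Finset.mem_range, Finset.mem_Ico]
    omega
  have hA : ∀ s : ℕ, (∑ i ∈ Icc 1 s, ((s : ℤ) + i - 1)) = ∑ i ∈ range s, ((s : ℤ) + i) := by
    intro s
    rw [show Icc 1 s = Ico 1 (s + 1) from (Finset.Ico_add_one_right_eq_Icc _ _).symm,
      Finset.sum_Ico_eq_sum_range]
    rw [show s + 1 - 1 = s from by omega]
    refine Finset.sum_congr rfl (fun i _ => ?_)
    push_cast
    ring
  rw [hB, hC]
  rw [Finset.sum_congr rfl (fun s _ => hA s)]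
  have hAC : ((∑ s ∈ range l, ∑ i ∈ range s, ((s : ℤ) + i))
      + ∑ j ∈ range l, ∑ i ∈ range j, (-(2 * ((l : ℤ) + k)) - i - j))
      = ∑ s ∈ range l, (-(2 * ((l : ℤ) + k))) * s := by
    rw [← Finset.sum_add_distrib]
    refine Finset.sum_congr rfl (fun s _ => ?_)
    rw [← Finset.sum_add_distrib]
    have : ∀ i ∈ range s, ((s : ℤ) + i) + (-(2 * ((l : ℤ) + k)) - i - s) = -(2 * ((l : ℤ) + k)) := by
      intro i _; ring
    rw [Finset.sum_congr rfl this, Finset.sum_const, Finset.card_range, nsmul_eq_mul]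
    ring
  have hgauss : (∑ s ∈ range l, (s : ℤ)) * 2 = (l : ℤ) * ((l : ℤ) - 1) := by
    have h := congrArg (Nat.cast : ℕ → ℤ) (Finset.sum_range_id_mul_two l)
    have h2 : ((l - 1 : ℕ) : ℤ) = (l : ℤ) - 1 := by omega
    push_cast at h
    rw [h2] at h
    exact h
  -- combine
  have hBD : (∑ m ∈ range l, 2 * (m : ℤ) * m) + (∑ s ∈ range l, (-2 * (s : ℤ) * s)) = 0 := by
    rw [← Finset.sum_add_distrib]
    refine Finset.sum_eq_zero (fun s _ => by ring)
  calc ((∑ s ∈ range l, ∑ i ∈ range s, ((s : ℤ) + i))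
      + ∑ m ∈ range l, 2 * (m : ℤ) * m)
      + (∑ j ∈ range l, ∑ i ∈ range j, (-(2 * ((l : ℤ) + k)) - i - j))
      + ∑ s ∈ range l, (-2 * (s : ℤ) * s)
      = ((∑ s ∈ range l, ∑ i ∈ range s, ((s : ℤ) + i))
        + ∑ j ∈ range l, ∑ i ∈ range j, (-(2 * ((l : ℤ) + k)) - i - j))
        + ((∑ m ∈ range l, 2 * (m : ℤ) * m) + ∑ s ∈ range l, (-2 * (s : ℤ) * s)) := by ring
    _ = (∑ s ∈ range l, (-(2 * ((l : ℤ) + k))) * s) + 0 := by rw [hAC, hBD]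
    _ = -(2 * ((l : ℤ) + k)) * ∑ s ∈ range l, (s : ℤ) := by
        rw [add_zero, Finset.mul_sum]
    _ = -((l : ℤ) * ((l : ℤ) - 1) * ((k : ℤ) + l)) := by
        linear_combination (-((l : ℤ) + k)) * hgauss

end
section
open Finset
variable {q x : ℂ}

lemma entry_eq (hq0 : q ≠ 0) (hroot : ∀ m : ℕ, 0 < m → q ^ m ≠ 1)
    {l k r s : ℕ} (hl : 1 ≤ l) (hs : s ≤ l - 1) :
    q ^ (-((s : ℤ) * ((l : ℤ) + k + r - s))) * qBinom q (l + k + r) s *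
        ∏ j ∈ Finset.range (l + k + r - s), (x - q ^ (-(2 * (j : ℤ))))
    = (∏ j ∈ Finset.range (k + r + 1), (x - q ^ (-(2 * (j : ℤ)))))
      * (((∏ i ∈ Icc 1 s, (-q ^ ((s : ℤ) + i - 1) / (q ^ (i : ℤ) - q ^ (-(i : ℤ)))))
            * (∏ m ∈ Icc (s + 1) (l - 1), (-q ^ (2 * (m : ℤ)))))
          * ((∏ i ∈ Icc 1 s, (yS q (l + k + r) - bS q i))
            * (∏ m ∈ Icc (s + 1) (l - 1), (yS q (l + k + r) - aS q x m)))) := by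
  have hexp : (-((s : ℤ) * ((l : ℤ) + k + r - s)))
      = -((s : ℤ) * (((l + k + r : ℕ) : ℤ) - s)) := by push_cast; ring
  rw [hexp, binom_part hq0 hroot (show s ≤ l + k + r by omega)]
  rw [Psplit hq0 hl hs (k := k) (r := r) (x := x)]
  rw [Finset.prod_mul_distrib]
  ring

end

/-- Let `q ∈ ℂ` be nonzero and not a root of unity, `k ≥ 0`, `l ≥ 1`
integers and `x ∈ ℂ`.  For `0 ≤ r,s ≤ l−1` put
`b r s = q^{−s(l+k+r−s)} [l+k+r choose s]_q ∏_{j=0}^{l+k+r−s−1} (x − q^{−2j})`.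
Then
`det b = q^{−l(l−1)(k+l)} ∏_{j=1}^{l−1} (x − q^{2(l−j)})^j (x − q^{−2(j+k)})^{l−j}
  ∏_{j=0}^{k} (x − q^{−2j})^l`. -/
theorem stmt5_det_qbinom_matrix (q : ℂ) (hq0 : q ≠ 0)
    (hqroot : ∀ m : ℕ, 0 < m → q ^ m ≠ 1)
    (k : ℕ) (l : ℕ) (hl : 1 ≤ l) (x : ℂ)
    (b : Fin l → Fin l → ℂ)
    (hb : ∀ r s : Fin l,
      b r s = q ^ (-((s : ℤ) * ((l : ℤ) + k + r - s))) * qBinom q (l + k + r) s *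
        ∏ j ∈ Finset.range (l + k + (r : ℕ) - (s : ℕ)), (x - q ^ (-(2 * (j : ℤ))))) :
    Matrix.det (Matrix.of b) =
      q ^ (-((l : ℤ) * ((l : ℤ) - 1) * ((k : ℤ) + l))) *
        (∏ j ∈ Finset.Icc 1 (l - 1),
          (x - q ^ (2 * ((l : ℤ) - j))) ^ (j : ℕ) *
            (x - q ^ (-(2 * ((j : ℤ) + k)))) ^ (l - j)) *
        ∏ j ∈ Finset.range (k + 1), (x - q ^ (-(2 * (j : ℤ)))) ^ l := by
  classical
  open Finset in
  -- the scalar functions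
  set g : ℕ → ℂ := fun j => x - q ^ (-(2 * (j : ℤ))) with hg
  set γf : ℕ → ℂ := fun s =>
      (∏ i ∈ Icc 1 s, (-q ^ ((s : ℤ) + i - 1) / (q ^ (i : ℤ) - q ^ (-(i : ℤ)))))
      * ∏ m ∈ Icc (s + 1) (l - 1), (-q ^ (2 * (m : ℤ))) with hγf
  -- decomposition of the matrix
  have hBdec : Matrix.of b = Matrix.of (fun r s : Fin l =>
      (∏ j ∈ Finset.range (k + (r : ℕ) + 1), g j) *
      (Matrix.of (fun r s : Fin l => γf (s : ℕ) *
        (Matrix.of (fun r s : Fin l =>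
          (∏ i ∈ Icc 1 (s : ℕ), (yS q (l + k + (r : ℕ)) - bS q i)) *
          ∏ m ∈ Icc ((s : ℕ) + 1) (l - 1), (yS q (l + k + (r : ℕ)) - aS q x m)) r s)) r s)) := by
    ext r s
    simp only [Matrix.of_apply]
    rw [hb r s]
    have hrw := entry_eq (q := q) (x := x) hq0 hqroot (l := l) (k := k)
      (r := (r : ℕ)) (s := (s : ℕ)) hl (by omega : (s : ℕ) ≤ l - 1)
    rw [show k + (r : ℕ) + 1 = k + (r : ℕ) + 1 from rfl]
    exact hrw
  rw [hBdec, Matrix.det_mul_column, Matrix.det_mul_row, det_F q x l k hl]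
  -- scalar bookkeeping
  set SA : ℤ := ∑ s ∈ range l, ∑ i ∈ Icc 1 s, ((s : ℤ) + i - 1) with hSA
  set SB : ℤ := ∑ s ∈ range l, ∑ m ∈ Icc (s + 1) (l - 1), (2 * (m : ℤ)) with hSB
  set SC : ℤ := ∑ i ∈ range l, ∑ j ∈ Ico (i + 1) l, (-(2 * ((l : ℤ) + k)) - i - j) with hSC
  set SD : ℤ := ∑ s ∈ range l, (-2 * (s : ℤ) * s) with hSD
  set Φ : ℂ := ∏ s ∈ range l, ∏ i ∈ Icc 1 s, (q ^ (i : ℤ) - q ^ (-(i : ℤ))) with hΦ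
  have hΦne : Φ ≠ 0 := by
    rw [hΦ]
    refine Finset.prod_ne_zero_iff.mpr (fun s _ => ?_)
    refine Finset.prod_ne_zero_iff.mpr (fun i hi => ?_)
    exact qdiff_ne hq0 hqroot (Finset.mem_Icc.mp hi).1
  -- (c1) row factors
  have hρ : (∏ i : Fin l, ∏ j ∈ range (k + (i : ℕ) + 1), g j)
      = (∏ j ∈ range (k + 1), (g j) ^ l)
        * ∏ j ∈ Icc 1 (l - 1), (x - q ^ (-(2 * ((j : ℤ) + k)))) ^ (l - j) := by
    rw [Fin.prod_univ_eq_prod_range (fun r => ∏ j ∈ range (k + r + 1), g j) l]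
    rw [rho_prod g l k hl, ← Finset.prod_pow]
    congr 1
  -- (c4) column constants
  have hγ : (∏ i : Fin l, γf (i : ℕ))
      = ((-1 : ℂ) ^ (l * (l - 1)) * q ^ (SA + SB)) / Φ := by
    rw [Fin.prod_univ_eq_prod_range γf l]
    have hstep : ∀ s ∈ range l, γf s
        = (-1 : ℂ) ^ (s + (l - 1 - s))
          * (q ^ ((∑ i ∈ Icc 1 s, ((s : ℤ) + i - 1)) + ∑ m ∈ Icc (s + 1) (l - 1), (2 * (m : ℤ)))
            / ∏ i ∈ Icc 1 s, (q ^ (i : ℤ) - q ^ (-(i : ℤ)))) := by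
      intro s hs
      simp only [Finset.mem_range] at hs
      simp only [hγf]
      rw [Finset.prod_div_distrib]
      have e1 : (∏ i ∈ Icc 1 s, (-q ^ ((s : ℤ) + i - 1)))
          = (-1 : ℂ) ^ s * q ^ (∑ i ∈ Icc 1 s, ((s : ℤ) + i - 1)) := by
        calc (∏ i ∈ Icc 1 s, (-q ^ ((s : ℤ) + i - 1)))
            = ∏ i ∈ Icc 1 s, ((-1 : ℂ) * q ^ ((s : ℤ) + i - 1)) :=
              Finset.prod_congr rfl (fun i _ => by ring)
          _ = (-1 : ℂ) ^ s * q ^ (∑ i ∈ Icc 1 s, ((s : ℤ) + i - 1)) := by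
              rw [Finset.prod_mul_distrib, Finset.prod_const, Nat.card_Icc,
                show s + 1 - 1 = s from by omega, zpow_finset_sum hq0]
      have e2 : (∏ m ∈ Icc (s + 1) (l - 1), (-q ^ (2 * (m : ℤ))))
          = (-1 : ℂ) ^ (l - 1 - s) * q ^ (∑ m ∈ Icc (s + 1) (l - 1), (2 * (m : ℤ))) := by
        calc (∏ m ∈ Icc (s + 1) (l - 1), (-q ^ (2 * (m : ℤ))))
            = ∏ m ∈ Icc (s + 1) (l - 1), ((-1 : ℂ) * q ^ (2 * (m : ℤ))) :=
              Finset.prod_congr rfl (fun m _ => by ring)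
          _ = (-1 : ℂ) ^ (l - 1 - s) * q ^ (∑ m ∈ Icc (s + 1) (l - 1), (2 * (m : ℤ))) := by
              rw [Finset.prod_mul_distrib, Finset.prod_const, Nat.card_Icc,
                show l - 1 + 1 - (s + 1) = l - 1 - s from by omega, zpow_finset_sum hq0]
      rw [e1, e2, pow_add, zpow_add₀ hq0]
      ring
    rw [Finset.prod_congr rfl hstep, Finset.prod_mul_distrib, Finset.prod_pow_eq_pow_sum,
      Finset.prod_div_distrib, ← zpow_finset_sum hq0]
    have h1 : (∑ i ∈ range l, (i + (l - 1 - i))) = l * (l - 1) := by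
      calc (∑ i ∈ range l, (i + (l - 1 - i)))
          = ∑ i ∈ range l, (l - 1) := Finset.sum_congr rfl (fun i hi => by
            simp only [Finset.mem_range] at hi; omega)
        _ = l * (l - 1) := by rw [Finset.sum_const, Finset.card_range, smul_eq_mul]
    rw [hSA, hSB, hΦ, ← Finset.sum_add_distrib, h1]
    ring
  -- (c3) Vandermonde factor
  have hV : (∏ i : Fin l, ∏ j ∈ Finset.Ioi i, (yS q (l + k + (i : ℕ)) - yS q (l + k + (j : ℕ))))
      = q ^ SC * Φ := by
    rw [fin_pair_to_nat l (fun i j => yS q (l + k + i) - yS q (l + k + j))]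
    have hpt : ∀ i ∈ range l, (∏ j ∈ Ico (i + 1) l, (yS q (l + k + i) - yS q (l + k + j)))
        = (∏ j ∈ Ico (i + 1) l, q ^ (-(2 * ((l : ℤ) + k)) - i - j))
          * ∏ j ∈ Ico (i + 1) l, (q ^ ((j - i : ℕ) : ℤ) - q ^ (-(((j - i : ℕ)) : ℤ))) := by
      intro i hi
      simp only [Finset.mem_range] at hi
      rw [← Finset.prod_mul_distrib]
      refine Finset.prod_congr rfl (fun j hj => ?_)
      simp only [Finset.mem_Ico] at hj
      have hji : ((j - i : ℕ) : ℤ) = (j : ℤ) - i := by omega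
      rw [hji, yS, yS, mul_sub, ← zpow_add₀ hq0, ← zpow_add₀ hq0,
        show (-(2 * ((l : ℤ) + k)) - i - j) + ((j : ℤ) - i) = -(2 * ((l + k + i : ℕ) : ℤ)) from by
          push_cast; ring,
        show (-(2 * ((l : ℤ) + k)) - i - j) + -((j : ℤ) - i) = -(2 * ((l + k + j : ℕ) : ℤ)) from by
          push_cast; ring]
    rw [Finset.prod_congr rfl hpt, Finset.prod_mul_distrib]
    congr 1
    · rw [Finset.prod_congr rfl (fun i _ => (zpow_finset_sum hq0 (Ico (i + 1) l) _).symm),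
        ← zpow_finset_sum hq0]
    · exact pair_diff_prod (fun d => q ^ (d : ℤ) - q ^ (-(d : ℤ))) l
  -- (c2) triangular factor
  have hPT : (∏ s : Fin l, ∏ i ∈ Icc 1 (s : ℕ), (aS q x (s : ℕ) - bS q i))
      = q ^ SD * ∏ j ∈ Icc 1 (l - 1), (x - q ^ (2 * ((l : ℤ) - j))) ^ j := by
    rw [Fin.prod_univ_eq_prod_range (fun s => ∏ i ∈ Icc 1 s, (aS q x s - bS q i)) l]
    have hstep : ∀ s ∈ range l, (∏ i ∈ Icc 1 s, (aS q x s - bS q i))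
        = q ^ (-2 * (s : ℤ) * s) * ∏ m ∈ Icc 1 s, (x - q ^ (2 * (m : ℤ))) := by
      intro s hs
      simp only [Finset.mem_range] at hs
      have h1 : ∀ i ∈ Icc 1 s, aS q x s - bS q i
          = q ^ (-(2 * (s : ℤ))) * (x - q ^ (2 * ((s + 1 - i : ℕ) : ℤ))) := by
        intro i hi
        simp only [Finset.mem_Icc] at hi
        have hc : ((s + 1 - i : ℕ) : ℤ) = (s : ℤ) + 1 - i := by omega
        rw [aS, bS, hc, mul_sub, ← zpow_add₀ hq0,
          show (-(2 * (s : ℤ)) + 2 * ((s : ℤ) + 1 - i)) = 2 - 2 * (i : ℤ) from by ring]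
        ring
      rw [Finset.prod_congr rfl h1, Finset.prod_mul_distrib, Finset.prod_const, Nat.card_Icc,
        show s + 1 - 1 = s from by omega]
      congr 1
      · rw [← zpow_natCast (q ^ (-(2 * (s : ℤ)))) s, ← zpow_mul,
          show (-(2 * (s : ℤ))) * ((s : ℕ) : ℤ) = -2 * (s : ℤ) * s from by push_cast; ring]
      · exact Icc_reflect (fun m => x - q ^ (2 * (m : ℤ))) s
    rw [Finset.prod_congr rfl hstep, Finset.prod_mul_distrib, ← zpow_finset_sum hq0]
    congr 1
    rw [tri_prod (fun m => x - q ^ (2 * (m : ℤ))) l hl]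
    refine Finset.prod_nbij' (fun m => l - m) (fun j => l - j) ?_ ?_ ?_ ?_ ?_
    · intro m hm; simp only [Finset.mem_Icc] at *; omega
    · intro j hj; simp only [Finset.mem_Icc] at *; omega
    · intro m hm; simp only [Finset.mem_Icc] at hm; show l - (l - m) = m; omega
    · intro j hj; simp only [Finset.mem_Icc] at hj; show l - (l - j) = j; omega
    · intro m hm
      simp only [Finset.mem_Icc] at hm
      have h2 : (l : ℤ) - ((l - m : ℕ) : ℤ) = (m : ℤ) := by omega
      rw [h2]
  -- put everything together
  rw [hρ, hγ, hV, hPT]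
  have hsign : ((-1 : ℂ)) ^ (l * (l - 1)) = 1 := by
    apply Even.neg_one_pow
    have h5 : l * (l - 1) = (l - 1) * ((l - 1) + 1) := by
      rw [Nat.sub_add_cancel hl]
      exact Nat.mul_comm l (l - 1)
    rw [h5]
    exact Nat.even_mul_succ_self (l - 1)
  rw [hsign, one_mul]
  have hq4 : q ^ (SA + SB) * q ^ SC * q ^ SD
      = q ^ (-((l : ℤ) * ((l : ℤ) - 1) * ((k : ℤ) + l))) := by
    rw [← zpow_add₀ hq0, ← zpow_add₀ hq0]
    congr 1
    rw [hSA, hSB, hSC, hSD]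
    exact exp_id l k hl
  rw [Finset.prod_mul_distrib]
  have hmid : q ^ (SA + SB) / Φ
        * ((q ^ SC * Φ) * (q ^ SD * ∏ j ∈ Icc 1 (l - 1), (x - q ^ (2 * ((l : ℤ) - j))) ^ j))
      = q ^ (-((l : ℤ) * ((l : ℤ) - 1) * ((k : ℤ) + l)))
        * ∏ j ∈ Icc 1 (l - 1), (x - q ^ (2 * ((l : ℤ) - j))) ^ j := by
    calc q ^ (SA + SB) / Φ
        * ((q ^ SC * Φ) * (q ^ SD * ∏ j ∈ Icc 1 (l - 1), (x - q ^ (2 * ((l : ℤ) - j))) ^ j))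
        = (q ^ (SA + SB) * q ^ SC * q ^ SD)
          * (∏ j ∈ Icc 1 (l - 1), (x - q ^ (2 * ((l : ℤ) - j))) ^ j) * (Φ / Φ) := by ring
      _ = _ := by rw [div_self hΦne, hq4]; ring
  rw [hmid]
  rw [hg]
  ring
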